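/- For any odd positive integer n and every X > 0, the function H(X) = X²(1 + e^{-πX}) / ((n² + X²)(1 - e^{-πX})) is strictly increasing, i.e., its derivative (2n²X(1 - e^{-2πX}) - 2πX²e^{-πX}(n² + X²)) / ((n² + X²)²(1 - e^{-πX})²) is positive for all X > 0. -/

import Mathlib

/-!
Pulling out the positive factor `2 X e^{-πX}`, the numerator of the derivative becomes
`2 n² sinh (πX) - n² πX - πX³`. The doubling formulas give `sinh t ≥ t + t³ / 8` for `t ≥ 0`,
so with `n² ≥ 1` this is at least `πX + πX³ (π² / 4 - 1) > 0`.
-/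

open Set Real

namespace Real

lemma one_add_sq_div_two_le_cosh (t : ℝ) : 1 + t ^ 2 / 2 ≤ cosh t := by
  wlog ht : 0 ≤ t generalizing t
  · simpa using this (-t) (by linarith)
  have hs : t / 2 ≤ sinh (t / 2) := self_le_sinh_iff.2 (by linarith)
  calc 1 + t ^ 2 / 2 = 1 + 2 * (t / 2) ^ 2 := by ring
    _ ≤ 1 + 2 * sinh (t / 2) ^ 2 := by gcongr
    _ = cosh (2 * (t / 2)) := by rw [cosh_two_mul, cosh_sq]; ring
    _ = cosh t := by ring_nf

lemma add_pow_three_div_eight_le_sinh {t : ℝ} (ht : 0 ≤ t) : t + t ^ 3 / 8 ≤ sinh t := by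
  have hs : t / 2 ≤ sinh (t / 2) := self_le_sinh_iff.2 (by linarith)
  have hc := one_add_sq_div_two_le_cosh (t / 2)
  calc t + t ^ 3 / 8 = 2 * (t / 2) * (1 + (t / 2) ^ 2 / 2) := by ring
    _ ≤ 2 * sinh (t / 2) * cosh (t / 2) := by gcongr
    _ = sinh t := by rw [← sinh_two_mul]; ring_nf

end Real

lemma multiplier_numerator_eq (a X : ℝ) :
    2 * a ^ 2 * X * (1 - exp (-2 * π * X)) - 2 * π * X ^ 2 * exp (-π * X) * (a ^ 2 + X ^ 2) =
      2 * X * exp (-π * X) * (2 * a ^ 2 * sinh (π * X) - π * X * a ^ 2 - π * X ^ 3) := by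
  have hinv : exp (-π * X) * exp (π * X) = 1 := by rw [← exp_add]; simp
  have hsq : exp (-2 * π * X) = exp (-π * X) ^ 2 := by rw [← exp_nat_mul]; ring_nf
  rw [sinh_eq, hsq, show -(π * X) = -π * X by ring]
  linear_combination (-2 * a ^ 2 * X) * hinv

lemma multiplier_numerator_pos {a X : ℝ} (ha : 1 ≤ a ^ 2) (hX : 0 < X) :
    0 < 2 * a ^ 2 * X * (1 - exp (-2 * π * X)) -
      2 * π * X ^ 2 * exp (-π * X) * (a ^ 2 + X ^ 2) := by
  have hsinh := add_pow_three_div_eight_le_sinh (by positivity : 0 ≤ π * X)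
  have hπ : 0 < π ^ 2 / 4 - 1 := by nlinarith [pi_gt_three]
  have hbracket : 0 < 2 * a ^ 2 * sinh (π * X) - π * X * a ^ 2 - π * X ^ 3 :=
    calc 0 < π * X + π * X ^ 3 * (π ^ 2 / 4 - 1) := by positivity
      _ ≤ a ^ 2 * (π * X + π ^ 3 * X ^ 3 / 4) - π * X ^ 3 := by
        linarith [mul_le_mul_of_nonneg_right ha (by positivity : 0 ≤ π * X + π ^ 3 * X ^ 3 / 4)]
      _ ≤ 2 * a ^ 2 * sinh (π * X) - π * X * a ^ 2 - π * X ^ 3 := by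
        linarith [mul_le_mul_of_nonneg_left hsinh (by positivity : 0 ≤ 2 * a ^ 2)]
  rw [multiplier_numerator_eq]
  positivity

lemma multiplier_deriv_pos {a X : ℝ} (ha : 1 ≤ a ^ 2) (hX : 0 < X) :
    0 < (2 * a ^ 2 * X * (1 - exp (-2 * π * X)) -
      2 * π * X ^ 2 * exp (-π * X) * (a ^ 2 + X ^ 2)) /
        ((a ^ 2 + X ^ 2) ^ 2 * (1 - exp (-π * X)) ^ 2) := by
  have hexp : 0 < 1 - exp (-π * X) := sub_pos.2 (exp_lt_one_iff.2 (by nlinarith [pi_pos]))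
  exact div_pos (multiplier_numerator_pos ha hX) (by positivity)

lemma hasDerivAt_multiplier (a : ℝ) {X : ℝ} (hX : X ≠ 0) :
    HasDerivAt (fun X : ℝ => X ^ 2 * (1 + exp (-π * X)) / ((a ^ 2 + X ^ 2) * (1 - exp (-π * X))))
      ((2 * a ^ 2 * X * (1 - exp (-2 * π * X)) - 2 * π * X ^ 2 * exp (-π * X) * (a ^ 2 + X ^ 2)) /
        ((a ^ 2 + X ^ 2) ^ 2 * (1 - exp (-π * X)) ^ 2)) X := by
  have hE : HasDerivAt (fun X : ℝ => exp (-π * X)) (-π * exp (-π * X)) X := by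
    simpa [mul_comm] using ((hasDerivAt_id X).const_mul (-π)).exp
  have hnum := (hasDerivAt_pow 2 X).mul ((hasDerivAt_const X (1 : ℝ)).add hE)
  have hden := ((hasDerivAt_const X (a ^ 2)).add (hasDerivAt_pow 2 X)).mul
    ((hasDerivAt_const X (1 : ℝ)).sub hE)
  have hsum : a ^ 2 + X ^ 2 ≠ 0 := by positivity
  have hexp : 1 - exp (-π * X) ≠ 0 := by
    rw [sub_ne_zero, ne_comm, Ne, exp_eq_one_iff]
    exact mul_ne_zero (neg_ne_zero.2 pi_ne_zero) hX
  refine (hnum.div hden (mul_ne_zero hsum hexp)).congr_deriv ?_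
  simp only [Pi.mul_apply, Pi.add_apply, Pi.sub_apply]
  rw [show -2 * π * X = -π * X + -π * X by ring, exp_add]
  field_simp
  ring

theorem stmt_2_general (n : ℕ) (hn : 0 < n) :
    StrictMonoOn (fun X : ℝ => X ^ 2 * (1 + Real.exp (-π * X)) /
        (((n : ℝ) ^ 2 + X ^ 2) * (1 - Real.exp (-π * X)))) (Set.Ioi 0) ∧
    ∀ X : ℝ, 0 < X →
      0 < (2 * (n : ℝ) ^ 2 * X * (1 - Real.exp (-2 * π * X)) -
            2 * π * X ^ 2 * Real.exp (-π * X) * ((n : ℝ) ^ 2 + X ^ 2)) /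
          (((n : ℝ) ^ 2 + X ^ 2) ^ 2 * (1 - Real.exp (-π * X)) ^ 2) := by
  have hn2 : (1 : ℝ) ≤ (n : ℝ) ^ 2 := one_le_pow₀ (by exact_mod_cast hn)
  refine ⟨?_, fun X hX => multiplier_deriv_pos hn2 hX⟩
  have hderiv (X : ℝ) (hX : X ∈ Ioi 0) := hasDerivAt_multiplier (n : ℝ) (ne_of_gt hX)
  refine strictMonoOn_of_deriv_pos (convex_Ioi 0)
    (fun X hX => (hderiv X hX).continuousAt.continuousWithinAt) fun X hX => ?_
  rw [interior_Ioi] at hX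
  rw [(hderiv X hX).deriv]
  exact multiplier_deriv_pos hn2 hX

theorem stmt_2 (n : ℕ) (hn : 0 < n) (hodd : Odd n) :
    StrictMonoOn (fun X : ℝ => X ^ 2 * (1 + Real.exp (-π * X)) /
        (((n : ℝ) ^ 2 + X ^ 2) * (1 - Real.exp (-π * X)))) (Set.Ioi 0) ∧
    ∀ X : ℝ, 0 < X →
      0 < (2 * (n : ℝ) ^ 2 * X * (1 - Real.exp (-2 * π * X)) -
            2 * π * X ^ 2 * Real.exp (-π * X) * ((n : ℝ) ^ 2 + X ^ 2)) /
          (((n : ℝ) ^ 2 + X ^ 2) ^ 2 * (1 - Real.exp (-π * X)) ^ 2) :=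
  stmt_2_general n hn
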